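/- Kostka numbers are invariant under permutation of the content: for any partition λ of n, any composition μ of n, and any permutation σ of the parts of μ, the number of semistandard Young tableaux of shape λ and content μ equals the number of semistandard Young tableaux of shape λ and content σ(μ). -/

import Mathlib

open BigOperators Finset


/-- The Kostka number: the number of semistandard Young tableaux of shape `lam`
whose content is the composition `μ = (μ 0, …, μ (k-1))`, i.e. the entry `i`
appears exactly `μ i` times for `i < k`, and no other entries appear. -/
noncomputable def kostka {k : ℕ} (lam : YoungDiagram) (μ : Fin k → ℕ) : ℕ :=
  Nat.card {T : SemistandardYoungTableau lam //
    ∀ v : ℕ, (lam.cells.filter (fun c => T c.1 c.2 = v)).card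
      = if h : v < k then μ ⟨v, h⟩ else 0}

namespace BKaux

/-! ### A rank function on finite sets of naturals -/

/-- rank of `c` in `F`: the number of elements of `F` less than `c`. -/
def rk (F : Finset ℕ) (c : ℕ) : ℕ := (F.filter (· < c)).card

lemma rk_lt_card {F : Finset ℕ} {c : ℕ} (hc : c ∈ F) : rk F c < F.card := by
  have h1 : F.filter (· < c) ⊆ F.erase c := by
    intro x hx
    simp only [mem_filter] at hx
    exact Finset.mem_erase.2 ⟨Nat.ne_of_lt hx.2, hx.1⟩
  calc rk F c ≤ (F.erase c).card := Finset.card_le_card h1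
    _ < F.card := Finset.card_erase_lt_of_mem hc

lemma rk_strictMonoOn {F : Finset ℕ} {c c' : ℕ} (hc : c ∈ F) (h : c < c') :
    rk F c < rk F c' := by
  apply Finset.card_lt_card
  constructor
  · intro x hx; simp only [mem_filter] at hx ⊢; exact ⟨hx.1, hx.2.trans h⟩
  · intro hsub
    have := hsub (Finset.mem_filter.2 ⟨hc, h⟩)
    simp only [mem_filter] at this
    omega

lemma rk_image {F : Finset ℕ} : F.image (rk F) = Finset.range F.card := by
  apply Finset.eq_of_subset_of_card_le
  · intro x hx
    simp only [Finset.mem_image] at hx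
    obtain ⟨c, hc, rfl⟩ := hx
    exact Finset.mem_range.2 (rk_lt_card hc)
  · rw [Finset.card_range]
    rw [Finset.card_image_of_injOn]
    intro a ha b hb hab
    by_contra hne
    rcases Nat.lt_or_ge a b with h | h
    · exact absurd hab (Nat.ne_of_lt (rk_strictMonoOn ha h))
    · have : b < a := by omega
      exact absurd hab.symm (Nat.ne_of_lt (rk_strictMonoOn hb this))

lemma rk_filter_card (F : Finset ℕ) (m : ℕ) (hm : m ≤ F.card) :
    (F.filter (fun c => rk F c < m)).card = m := by
  have hinj : Set.InjOn (rk F) ↑(F.filter (fun c => rk F c < m)) := by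
    intro a ha b hb hab
    simp only [coe_filter, Set.mem_setOf_eq] at ha hb
    by_contra hne
    rcases Nat.lt_or_ge a b with h | h
    · exact absurd hab (Nat.ne_of_lt (rk_strictMonoOn ha.1 h))
    · have : b < a := by omega
      exact absurd hab.symm (Nat.ne_of_lt (rk_strictMonoOn hb.1 this))
  have h1 : ((F.filter (fun c => rk F c < m)).image (rk F)).card
      = (F.filter (fun c => rk F c < m)).card := Finset.card_image_of_injOn hinj
  rw [← h1]
  have h2 : (F.filter (fun c => rk F c < m)).image (rk F)
      = (F.image (rk F)).filter (· < m) :=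
    (Finset.filter_image (f := rk F) (s := F) (p := (· < m))).symm
  rw [h2, rk_image]
  have : (Finset.range F.card).filter (· < m) = Finset.range m := by
    ext x; simp only [Finset.mem_filter, Finset.mem_range]; omega
  rw [this, Finset.card_range]

/-! ### Free cells for the Bender–Knuth move -/

/-- A cell `(r,c)` of `lam` is *free* for the Bender–Knuth move at value `i`:
its entry is `i` with no `i+1` directly below, or `i+1` with no `i` directly above. -/
def Free (lam : YoungDiagram) (T : SemistandardYoungTableau lam) (i r c : ℕ) : Prop :=
  (r, c) ∈ lam ∧
    ((T r c = i ∧ T (r + 1) c ≠ i + 1) ∨ (T r c = i + 1 ∧ (r = 0 ∨ T (r - 1) c ≠ i)))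

instance (lam : YoungDiagram) (T : SemistandardYoungTableau lam) (i r c : ℕ) :
    Decidable (Free lam T i r c) := by unfold Free; infer_instance

variable {lam : YoungDiagram}

lemma Free.mem {T : SemistandardYoungTableau lam} {i r c : ℕ} (h : Free lam T i r c) :
    (r, c) ∈ lam := h.1

lemma Free.val {T : SemistandardYoungTableau lam} {i r c : ℕ} (h : Free lam T i r c) :
    T r c = i ∨ T r c = i + 1 := h.2.imp And.left And.left

/-- a non-free cell with entry `i` has `i+1` directly below. -/
lemma below_of_not_free {T : SemistandardYoungTableau lam} {i r c : ℕ} (hmem : (r, c) ∈ lam)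
    (hv : T r c = i) (h : ¬ Free lam T i r c) : T (r + 1) c = i + 1 := by
  by_contra hne
  exact h ⟨hmem, Or.inl ⟨hv, hne⟩⟩

/-- a non-free cell with entry `i+1` has `i` directly above. -/
lemma above_of_not_free {T : SemistandardYoungTableau lam} {i r c : ℕ} (hmem : (r, c) ∈ lam)
    (hv : T r c = i + 1) (h : ¬ Free lam T i r c) : 0 < r ∧ T (r - 1) c = i := by
  by_contra hne
  apply h
  refine ⟨hmem, Or.inr ⟨hv, ?_⟩⟩
  rcases Nat.eq_zero_or_pos r with h0 | h0
  · exact Or.inl h0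
  · exact Or.inr fun hi => hne ⟨h0, hi⟩

/-- free cells with entry `i` form a suffix of the `i`-run in each row. -/
lemma free_suffix {T : SemistandardYoungTableau lam} {i r c c' : ℕ} (h : Free lam T i r c)
    (hcc : c < c') (hmem' : (r, c') ∈ lam) (hv : T r c = i) (hv' : T r c' = i) :
    Free lam T i r c' := by
  refine ⟨hmem', Or.inl ⟨hv', fun hb' => ?_⟩⟩
  have hmb' : (r + 1, c') ∈ lam := by
    by_contra hh
    rw [T.zeros hh] at hb'
    omega
  have hmb : (r + 1, c) ∈ lam := lam.up_left_mem le_rfl (Nat.le_of_lt hcc) hmb'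
  have h1 : T (r + 1) c ≤ T (r + 1) c' := T.row_weak hcc hmb'
  have h2 : T r c < T (r + 1) c := T.col_strict (Nat.lt_succ_self r) hmb
  rcases h.2 with ⟨_, hne⟩ | ⟨hv2, _⟩
  · omega
  · omega

/-- free cells with entry `i+1` form a prefix of the `i+1`-run in each row. -/
lemma free_prefix {T : SemistandardYoungTableau lam} {i r c c' : ℕ} (h : Free lam T i r c')
    (hcc : c < c') (hmem : (r, c) ∈ lam) (hv : T r c = i + 1) (hv' : T r c' = i + 1) :
    Free lam T i r c := by
  refine ⟨hmem, Or.inr ⟨hv, ?_⟩⟩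
  rcases Nat.eq_zero_or_pos r with h0 | h0
  · exact Or.inl h0
  right
  intro habove
  have hma' : (r - 1, c') ∈ lam := lam.up_left_mem (Nat.sub_le r 1) le_rfl h.mem
  have h1 : T (r - 1) c ≤ T (r - 1) c' := T.row_weak hcc hma'
  have h2 : T (r - 1) c' < T r c' := T.col_strict (by omega) h.mem
  rcases h.2 with ⟨hv2, _⟩ | ⟨_, hor⟩
  · omega
  · rcases hor with h0' | hne
    · omega
    · omega

/-- cells with smaller entry come first in a row. -/
lemma lt_of_val_lt {T : SemistandardYoungTableau lam} {r c c' : ℕ} (hmem : (r, c) ∈ lam)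
    (h : T r c < T r c') : c < c' := by
  by_contra hh
  have := T.row_weak_of_le (Nat.le_of_not_lt hh) hmem
  omega

/-! ### Row data -/

def rowFree (lam : YoungDiagram) (T : SemistandardYoungTableau lam) (i r : ℕ) : Finset ℕ :=
  (Finset.range (lam.rowLen r)).filter (fun c => Free lam T i r c)

lemma mem_rowFree {T : SemistandardYoungTableau lam} {i r c : ℕ} :
    c ∈ rowFree lam T i r ↔ Free lam T i r c := by
  simp only [rowFree, Finset.mem_filter, Finset.mem_range]
  exact ⟨fun h => h.2, fun h => ⟨YoungDiagram.mem_iff_lt_rowLen.1 h.1, h⟩⟩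

def A (lam : YoungDiagram) (T : SemistandardYoungTableau lam) (i r : ℕ) : ℕ :=
  ((rowFree lam T i r).filter (fun c => T r c = i)).card

def B (lam : YoungDiagram) (T : SemistandardYoungTableau lam) (i r : ℕ) : ℕ :=
  ((rowFree lam T i r).filter (fun c => T r c = i + 1)).card

def pos (lam : YoungDiagram) (T : SemistandardYoungTableau lam) (i r c : ℕ) : ℕ :=
  ((Finset.range c).filter (fun c' => Free lam T i r c')).card

lemma pos_eq_rk (T : SemistandardYoungTableau lam) (i r c : ℕ) :
    pos lam T i r c = rk (rowFree lam T i r) c := by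
  unfold pos rk
  congr 1
  ext x
  simp only [Finset.mem_filter, Finset.mem_range, mem_rowFree, rowFree]
  constructor
  · rintro ⟨h1, h2⟩
    exact ⟨⟨YoungDiagram.mem_iff_lt_rowLen.1 h2.1, h2⟩, h1⟩
  · rintro ⟨⟨_, h2⟩, h1⟩
    exact ⟨h1, h2⟩

lemma pos_mono (T : SemistandardYoungTableau lam) (i r : ℕ) {c c' : ℕ} (h : c ≤ c') :
    pos lam T i r c ≤ pos lam T i r c' :=
  Finset.card_le_card (Finset.filter_subset_filter _ (by
    intro x hx; simp only [Finset.mem_range] at hx ⊢; omega))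

lemma pos_lt_A {T : SemistandardYoungTableau lam} {i r c : ℕ} (h : Free lam T i r c)
    (hv : T r c = i) : pos lam T i r c < A lam T i r := by
  have hsub : (Finset.range c).filter (fun c' => Free lam T i r c')
      ⊆ ((rowFree lam T i r).filter (fun c' => T r c' = i)).erase c := by
    intro x hx
    simp only [Finset.mem_filter, Finset.mem_range] at hx
    obtain ⟨hxc, hxf⟩ := hx
    have hxv : T r x = i := by
      rcases hxf.val with hh | hh
      · exact hh
      · exfalso
        have : c < x := lt_of_val_lt h.mem (show T r c < T r x by omega)
        omega
    exact Finset.mem_erase.2 ⟨Nat.ne_of_lt hxc, Finset.mem_filter.2 ⟨mem_rowFree.2 hxf, hxv⟩⟩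
  have hc : c ∈ (rowFree lam T i r).filter (fun c' => T r c' = i) :=
    Finset.mem_filter.2 ⟨mem_rowFree.2 h, hv⟩
  have := Finset.card_le_card hsub
  have := Finset.card_erase_lt_of_mem hc
  unfold pos A
  omega

lemma A_le_pos {T : SemistandardYoungTableau lam} {i r c : ℕ} (h : Free lam T i r c)
    (hv : T r c = i + 1) : A lam T i r ≤ pos lam T i r c := by
  apply Finset.card_le_card
  intro x hx
  simp only [Finset.mem_filter, mem_rowFree] at hx
  obtain ⟨hxf, hxv⟩ := hx
  have hxc : x < c := lt_of_val_lt hxf.mem (show T r x < T r c by omega)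
  simp only [Finset.mem_filter, Finset.mem_range]
  exact ⟨hxc, hxf⟩

lemma A_add_B (T : SemistandardYoungTableau lam) (i r : ℕ) :
    A lam T i r + B lam T i r = (rowFree lam T i r).card := by
  have hB : (rowFree lam T i r).filter (fun c => T r c = i + 1)
      = (rowFree lam T i r).filter (fun c => ¬ T r c = i) := by
    ext x
    simp only [Finset.mem_filter, mem_rowFree]
    constructor
    · rintro ⟨hf, hv⟩; exact ⟨hf, by omega⟩
    · rintro ⟨hf, hv⟩
      rcases hf.val with hh | hh
      · exact absurd hh hv
      · exact ⟨hf, hh⟩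
  unfold A B
  rw [hB]
  exact Finset.card_filter_add_card_filter_not _

lemma B_le_card (T : SemistandardYoungTableau lam) (i r : ℕ) :
    B lam T i r ≤ (rowFree lam T i r).card := Finset.card_le_card (Finset.filter_subset _ _)


/-! ### The Bender–Knuth move -/

def bkEntry (lam : YoungDiagram) (T : SemistandardYoungTableau lam) (i r c : ℕ) : ℕ :=
  if Free lam T i r c then (if pos lam T i r c < B lam T i r then i else i + 1) else T r c

lemma bkEntry_of_not_free {T : SemistandardYoungTableau lam} {i r c : ℕ}
    (h : ¬ Free lam T i r c) : bkEntry lam T i r c = T r c := if_neg h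

lemma bkEntry_le_of_free {T : SemistandardYoungTableau lam} {i r c : ℕ}
    (h : Free lam T i r c) :
    i ≤ bkEntry lam T i r c ∧ bkEntry lam T i r c ≤ i + 1 := by
  unfold bkEntry
  rw [if_pos h]
  split <;> omega

lemma bkEntry_row_weak {T : SemistandardYoungTableau lam} {i r j1 j2 : ℕ} (hj : j1 < j2)
    (hmem2 : (r, j2) ∈ lam) : bkEntry lam T i r j1 ≤ bkEntry lam T i r j2 := by
  have hmem1 : (r, j1) ∈ lam := lam.up_left_mem le_rfl (Nat.le_of_lt hj) hmem2
  have hTw : T r j1 ≤ T r j2 := T.row_weak hj hmem2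
  by_cases hf1 : Free lam T i r j1 <;> by_cases hf2 : Free lam T i r j2
  · -- both free
    unfold bkEntry
    rw [if_pos hf1, if_pos hf2]
    have hp : pos lam T i r j1 ≤ pos lam T i r j2 := pos_mono T i r (Nat.le_of_lt hj)
    split <;> split <;> omega
  · -- j1 free, j2 not
    rw [bkEntry_of_not_free hf2]
    have h1 := bkEntry_le_of_free (T := T) hf1
    rcases hf1.val with hv | hv
    · have : T r j2 ≠ i := fun hv' => hf2 (free_suffix hf1 hj hmem2 hv hv')
      omega
    · omega
  · -- j2 free, j1 not
    rw [bkEntry_of_not_free hf1]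
    have h2 := bkEntry_le_of_free (T := T) hf2
    have hne : T r j1 ≠ i + 1 := by
      intro hv
      rcases hf2.val with hv' | hv'
      · omega
      · exact hf1 (free_prefix hf2 hj hmem1 hv hv')
    rcases hf2.val with hv' | hv' <;> omega
  · rw [bkEntry_of_not_free hf1, bkEntry_of_not_free hf2]
    exact hTw

lemma bkEntry_col_adj {T : SemistandardYoungTableau lam} {i r c : ℕ}
    (hmem : (r + 1, c) ∈ lam) : bkEntry lam T i r c < bkEntry lam T i (r + 1) c := by
  have hmem0 : (r, c) ∈ lam := lam.up_left_mem (Nat.le_succ r) le_rfl hmem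
  have hud : T r c < T (r + 1) c := T.col_strict (Nat.lt_succ_self r) hmem
  by_cases hf1 : Free lam T i r c
  · have hd : i + 2 ≤ T (r + 1) c := by
      rcases hf1.2 with ⟨hv, hne⟩ | ⟨hv, _⟩ <;> omega
    have hf2 : ¬ Free lam T i (r + 1) c := by
      intro hf2
      rcases hf2.val with h | h <;> omega
    rw [bkEntry_of_not_free hf2]
    have h1 := bkEntry_le_of_free (T := T) hf1
    omega
  · rw [bkEntry_of_not_free hf1]
    by_cases hf2 : Free lam T i (r + 1) c
    · have h2 := bkEntry_le_of_free (T := T) hf2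
      rcases hf2.val with hd | hd
      · omega
      · have hne : T r c ≠ i := by
          rcases hf2.2 with ⟨h1, _⟩ | ⟨_, h2'⟩
          · omega
          · rcases h2' with h0 | hne'
            · omega
            · simpa using hne'
        omega
    · rw [bkEntry_of_not_free hf2]
      exact hud

lemma bkEntry_col_strict {T : SemistandardYoungTableau lam} {i r1 r2 c : ℕ} (hr : r1 < r2)
    (hmem : (r2, c) ∈ lam) : bkEntry lam T i r1 c < bkEntry lam T i r2 c := by
  induction r2, hr using Nat.le_induction with
  | base => exact bkEntry_col_adj hmem
  | succ r2 hr ih =>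
    have hmem' : (r2, c) ∈ lam := lam.up_left_mem (Nat.le_succ r2) le_rfl hmem
    exact (ih hmem').trans (bkEntry_col_adj hmem)

/-- The Bender–Knuth move on a semistandard Young tableau. -/
def bk (lam : YoungDiagram) (T : SemistandardYoungTableau lam) (i : ℕ) :
    SemistandardYoungTableau lam where
  entry := bkEntry lam T i
  row_weak' := fun hj hmem => bkEntry_row_weak hj hmem
  col_strict' := fun hr hmem => bkEntry_col_strict hr hmem
  zeros' := fun hmem => by
    rw [bkEntry_of_not_free (fun hf => hmem hf.mem)]
    exact T.zeros hmem

lemma bk_apply (T : SemistandardYoungTableau lam) (i r c : ℕ) :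
    bk lam T i r c = bkEntry lam T i r c := rfl


/-! ### `bk` is an involution -/

lemma bk_succ_ne {T : SemistandardYoungTableau lam} {i r c : ℕ} (hf : Free lam T i r c) :
    bk lam T i (r + 1) c ≠ i + 1 := by
  by_cases hm : (r + 1, c) ∈ lam
  · have hd : i + 2 ≤ T (r + 1) c := by
      have := T.col_strict (show r < r + 1 by omega) hm
      rcases hf.2 with ⟨hv, hne⟩ | ⟨hv, _⟩ <;> omega
    have hnf : ¬ Free lam T i (r + 1) c := by
      intro hf2
      rcases hf2.val with h | h <;> omega
    rw [bk_apply, bkEntry_of_not_free hnf]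
    omega
  · have hnf : ¬ Free lam T i (r + 1) c := fun hf2 => hm hf2.mem
    rw [bk_apply, bkEntry_of_not_free hnf, T.zeros hm]
    omega

lemma bk_pred_ne {T : SemistandardYoungTableau lam} {i r c : ℕ} (hf : Free lam T i r c)
    (hr : 0 < r) : bk lam T i (r - 1) c ≠ i := by
  have hu : T (r - 1) c < T r c := T.col_strict (by omega) hf.mem
  have hlt : T (r - 1) c < i := by
    rcases hf.2 with ⟨hv, _⟩ | ⟨hv, hor⟩
    · omega
    · rcases hor with h0 | hne
      · omega
      · omega
  have hnf : ¬ Free lam T i (r - 1) c := by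
    intro hf2; rcases hf2.val with h | h <;> omega
  rw [bk_apply, bkEntry_of_not_free hnf]
  omega

lemma free_bk {T : SemistandardYoungTableau lam} {i r c : ℕ} :
    Free lam (bk lam T i) i r c ↔ Free lam T i r c := by
  constructor
  · intro h'
    by_contra hnf
    have heq : bk lam T i r c = T r c := bkEntry_of_not_free hnf
    rcases h'.val with hv | hv
    · -- T r c = i, so there is an i+1 below which is also non-free
      have hvT : T r c = i := by omega
      have hb : T (r + 1) c = i + 1 := below_of_not_free h'.mem hvT hnf
      have hmb : (r + 1, c) ∈ lam := by
        by_contra hh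
        rw [T.zeros hh] at hb
        omega
      have hnf2 : ¬ Free lam T i (r + 1) c := by
        rintro ⟨_, ⟨hv2, _⟩ | ⟨_, h2⟩⟩
        · omega
        · rcases h2 with h0 | hne
          · omega
          · simp only [Nat.add_sub_cancel] at hne
            omega
      have hbk2 : bk lam T i (r + 1) c = i + 1 := by
        rw [bk_apply, bkEntry_of_not_free hnf2]; exact hb
      rcases h'.2 with ⟨_, hne⟩ | ⟨hv2, _⟩
      · exact hne hbk2
      · omega
    · -- T r c = i + 1, so there is an i above which is also non-free
      have hvT : T r c = i + 1 := by omega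
      obtain ⟨hr, ha⟩ := above_of_not_free h'.mem hvT hnf
      have hnf2 : ¬ Free lam T i (r - 1) c := by
        rintro ⟨_, ⟨_, hne⟩ | ⟨hv2, _⟩⟩
        · have hpp : r - 1 + 1 = r := by omega
          rw [hpp] at hne
          omega
        · omega
      have hbk2 : bk lam T i (r - 1) c = i := by
        rw [bk_apply, bkEntry_of_not_free hnf2]; exact ha
      rcases h'.2 with ⟨hv2, _⟩ | ⟨_, hor⟩
      · omega
      · rcases hor with h0 | hne
        · omega
        · exact hne hbk2
  · intro hf
    have hval : bk lam T i r c = i ∨ bk lam T i r c = i + 1 := by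
      have := bkEntry_le_of_free (T := T) hf
      rw [bk_apply]
      omega
    refine ⟨hf.mem, ?_⟩
    rcases hval with hv | hv
    · exact Or.inl ⟨hv, bk_succ_ne hf⟩
    · refine Or.inr ⟨hv, ?_⟩
      rcases Nat.eq_zero_or_pos r with h0 | h0
      · exact Or.inl h0
      · exact Or.inr (bk_pred_ne hf h0)

lemma rowFree_bk (T : SemistandardYoungTableau lam) (i r : ℕ) :
    rowFree lam (bk lam T i) i r = rowFree lam T i r := by
  ext c
  simp only [mem_rowFree, free_bk]

lemma pos_bk (T : SemistandardYoungTableau lam) (i r c : ℕ) :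
    pos lam (bk lam T i) i r c = pos lam T i r c := by
  unfold pos
  congr 1
  exact Finset.filter_congr fun x _ => by simp only [free_bk]

lemma filter_pos_lt_card (T : SemistandardYoungTableau lam) (i r : ℕ) {m : ℕ}
    (hm : m ≤ (rowFree lam T i r).card) :
    ((rowFree lam T i r).filter (fun c => pos lam T i r c < m)).card = m := by
  have : (rowFree lam T i r).filter (fun c => pos lam T i r c < m)
      = (rowFree lam T i r).filter (fun c => rk (rowFree lam T i r) c < m) := by
    apply Finset.filter_congr
    intro x _
    rw [pos_eq_rk]
  rw [this, rk_filter_card _ _ hm]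

lemma B_bk (T : SemistandardYoungTableau lam) (i r : ℕ) :
    B lam (bk lam T i) i r = A lam T i r := by
  unfold B
  rw [rowFree_bk]
  have hfe : (rowFree lam T i r).filter (fun c => bk lam T i r c = i + 1)
      = (rowFree lam T i r).filter (fun c => ¬ (pos lam T i r c < B lam T i r)) := by
    apply Finset.filter_congr
    intro x hx
    rw [mem_rowFree] at hx
    rw [bk_apply]
    unfold bkEntry
    rw [if_pos hx]
    constructor
    · intro h
      intro hlt
      rw [if_pos hlt] at h
      omega
    · intro h
      rw [if_neg h]
  rw [hfe]
  have h1 := Finset.card_filter_add_card_filter_not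
    (s := rowFree lam T i r) (p := fun c => pos lam T i r c < B lam T i r)
  have h2 := filter_pos_lt_card T i r (B_le_card T i r)
  have h3 := A_add_B T i r
  omega

lemma bk_bk (T : SemistandardYoungTableau lam) (i : ℕ) : bk lam (bk lam T i) i = T := by
  apply SemistandardYoungTableau.ext
  intro r c
  by_cases hf : Free lam T i r c
  · have hf' : Free lam (bk lam T i) i r c := free_bk.2 hf
    rw [bk_apply]
    unfold bkEntry
    rw [if_pos hf', pos_bk, B_bk]
    rcases hf.val with hv | hv
    · rw [if_pos (pos_lt_A hf hv)]
      omega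
    · rw [if_neg (fun h => by have := A_le_pos hf hv; omega)]
      omega
  · have hf' : ¬ Free lam (bk lam T i) i r c := fun h => hf (free_bk.1 h)
    rw [bk_apply, bkEntry_of_not_free hf', bk_apply, bkEntry_of_not_free hf]


/-! ### Counting -/

lemma card_filter_split {α : Type*} (s : Finset α) (P Q : α → Prop)
    [DecidablePred P] [DecidablePred Q] :
    (s.filter P).card = (s.filter fun a => P a ∧ Q a).card
      + (s.filter fun a => P a ∧ ¬ Q a).card := by
  rw [← Finset.filter_filter, ← Finset.filter_filter]
  exact (Finset.card_filter_add_card_filter_not (s := s.filter P) (p := Q)).symm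

lemma card_cells_filter (P : ℕ × ℕ → Prop) [DecidablePred P] :
    (lam.cells.filter P).card
      = ∑ r ∈ Finset.range (lam.colLen 0),
          ((Finset.range (lam.rowLen r)).filter (fun c => P (r, c))).card := by
  rw [Finset.card_eq_sum_card_fiberwise (f := Prod.fst) (t := Finset.range (lam.colLen 0))
    (fun p hp => by
      simp only [Finset.mem_coe, Finset.mem_filter, YoungDiagram.mem_cells] at hp
      have : (p.1, 0) ∈ lam := lam.up_left_mem le_rfl (Nat.zero_le _) hp.1
      exact Finset.mem_range.2 (YoungDiagram.mem_iff_lt_colLen.1 this))]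
  refine Finset.sum_congr rfl fun r _ => ?_
  refine Finset.card_bij' (fun p _ => p.2) (fun c _ => (r, c)) ?_ ?_ ?_ ?_
  · intro p hp
    simp only [Finset.mem_filter, YoungDiagram.mem_cells] at hp
    obtain ⟨⟨hmem, hP⟩, hr⟩ := hp
    subst hr
    simp only [Finset.mem_filter, Finset.mem_range]
    exact ⟨YoungDiagram.mem_iff_lt_rowLen.1 hmem, hP⟩
  · intro c hc
    simp only [Finset.mem_filter, Finset.mem_range] at hc
    simp only [Finset.mem_filter, YoungDiagram.mem_cells]
    exact ⟨⟨YoungDiagram.mem_iff_lt_rowLen.2 hc.1, hc.2⟩, by trivial⟩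
  · intro p hp
    simp only [Finset.mem_filter] at hp
    rw [Prod.mk.injEq]
    exact ⟨hp.2.symm, rfl⟩
  · intro c _
    rfl

lemma nonfree_pair_card (T : SemistandardYoungTableau lam) (i : ℕ) :
    (lam.cells.filter (fun p => T p.1 p.2 = i ∧ ¬ Free lam T i p.1 p.2)).card
      = (lam.cells.filter (fun p => T p.1 p.2 = i + 1 ∧ ¬ Free lam T i p.1 p.2)).card := by
  refine Finset.card_bij' (fun p _ => (p.1 + 1, p.2)) (fun p _ => (p.1 - 1, p.2)) ?_ ?_ ?_ ?_
  · intro p hp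
    simp only [Finset.mem_filter, YoungDiagram.mem_cells] at hp ⊢
    obtain ⟨hmem, hv, hnf⟩ := hp
    have hb : T (p.1 + 1) p.2 = i + 1 := below_of_not_free hmem hv hnf
    have hmb : (p.1 + 1, p.2) ∈ lam := by
      by_contra hh
      rw [T.zeros hh] at hb
      omega
    refine ⟨hmb, hb, ?_⟩
    rintro ⟨_, ⟨hv2, _⟩ | ⟨_, h0 | hne⟩⟩
    · omega
    · omega
    · simp only [Nat.add_sub_cancel] at hne
      omega
  · intro p hp
    simp only [Finset.mem_filter, YoungDiagram.mem_cells] at hp ⊢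
    obtain ⟨hmem, hv, hnf⟩ := hp
    obtain ⟨hr, ha⟩ := above_of_not_free hmem hv hnf
    have hma : (p.1 - 1, p.2) ∈ lam := lam.up_left_mem (Nat.sub_le _ _) le_rfl hmem
    refine ⟨hma, ha, ?_⟩
    rintro ⟨_, ⟨_, hne⟩ | ⟨hv2, _⟩⟩
    · have hpp : p.1 - 1 + 1 = p.1 := by omega
      rw [hpp] at hne
      omega
    · omega
  · intro p hp
    show (p.1 + 1 - 1, p.2) = p
    rw [Prod.mk.injEq]
    exact ⟨by omega, rfl⟩
  · intro p hp
    simp only [Finset.mem_filter, YoungDiagram.mem_cells] at hp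
    obtain ⟨hmem, hv, hnf⟩ := hp
    obtain ⟨hr, _⟩ := above_of_not_free hmem hv hnf
    show (p.1 - 1 + 1, p.2) = p
    rw [Prod.mk.injEq]
    exact ⟨by omega, rfl⟩

/-- count of entries equal to `v`. -/
def cnt (lam : YoungDiagram) (T : SemistandardYoungTableau lam) (v : ℕ) : ℕ :=
  (lam.cells.filter (fun c => T c.1 c.2 = v)).card

lemma cnt_bk_other (T : SemistandardYoungTableau lam) {i v : ℕ} (hvi : v ≠ i)
    (hvi1 : v ≠ i + 1) : cnt lam (bk lam T i) v = cnt lam T v := by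
  unfold cnt
  congr 1
  apply Finset.filter_congr
  intro p _
  by_cases hf : Free lam T i p.1 p.2
  · have h1 := bkEntry_le_of_free (T := T) hf
    have h2 := hf.val
    rw [bk_apply]
    constructor <;> intro h <;> omega
  · rw [bk_apply, bkEntry_of_not_free hf]

lemma free_row_count_pos (T : SemistandardYoungTableau lam) (i r : ℕ) :
    ((Finset.range (lam.rowLen r)).filter
        (fun c => Free lam T i r c ∧ pos lam T i r c < B lam T i r)).card = B lam T i r := by
  rw [← Finset.filter_filter]
  exact filter_pos_lt_card T i r (B_le_card T i r)

lemma free_row_count_neg (T : SemistandardYoungTableau lam) (i r : ℕ) :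
    ((Finset.range (lam.rowLen r)).filter
        (fun c => Free lam T i r c ∧ ¬ pos lam T i r c < B lam T i r)).card = A lam T i r := by
  rw [← Finset.filter_filter]
  have h1 := Finset.card_filter_add_card_filter_not
    (s := rowFree lam T i r) (p := fun c => pos lam T i r c < B lam T i r)
  have h2 := filter_pos_lt_card T i r (B_le_card T i r)
  have h3 := A_add_B T i r
  show ((rowFree lam T i r).filter _).card = _
  omega

lemma cnt_bk_i (T : SemistandardYoungTableau lam) (i : ℕ) :
    cnt lam (bk lam T i) i = cnt lam T (i + 1) := by
  unfold cnt
  rw [card_filter_split lam.cells (fun p => bk lam T i p.1 p.2 = i)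
    (fun p => Free lam T i p.1 p.2)]
  rw [card_filter_split lam.cells (fun p => T p.1 p.2 = i + 1)
    (fun p => Free lam T i p.1 p.2)]
  have e1 : lam.cells.filter (fun p => bk lam T i p.1 p.2 = i ∧ Free lam T i p.1 p.2)
      = lam.cells.filter (fun p => Free lam T i p.1 p.2
          ∧ pos lam T i p.1 p.2 < B lam T i p.1) := by
    apply Finset.filter_congr
    intro p _
    rw [bk_apply]
    unfold bkEntry
    constructor
    · rintro ⟨hv, hf⟩
      rw [if_pos hf] at hv
      refine ⟨hf, ?_⟩
      by_contra hh
      rw [if_neg hh] at hv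
      omega
    · rintro ⟨hf, hlt⟩
      rw [if_pos hf, if_pos hlt]
      exact ⟨rfl, hf⟩
  have e2 : lam.cells.filter (fun p => bk lam T i p.1 p.2 = i ∧ ¬ Free lam T i p.1 p.2)
      = lam.cells.filter (fun p => T p.1 p.2 = i ∧ ¬ Free lam T i p.1 p.2) := by
    apply Finset.filter_congr
    intro p _
    constructor
    · rintro ⟨hv, hf⟩
      rw [bk_apply, bkEntry_of_not_free hf] at hv
      exact ⟨hv, hf⟩
    · rintro ⟨hv, hf⟩
      rw [bk_apply, bkEntry_of_not_free hf]
      exact ⟨hv, hf⟩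
  have e3 : (lam.cells.filter (fun p => Free lam T i p.1 p.2
        ∧ pos lam T i p.1 p.2 < B lam T i p.1)).card
      = (lam.cells.filter (fun p => T p.1 p.2 = i + 1 ∧ Free lam T i p.1 p.2)).card := by
    rw [card_cells_filter, card_cells_filter]
    refine Finset.sum_congr rfl fun r _ => ?_
    rw [free_row_count_pos T i r]
    have : (Finset.range (lam.rowLen r)).filter (fun c => T r c = i + 1 ∧ Free lam T i r c)
        = (rowFree lam T i r).filter (fun c => T r c = i + 1) := by
      unfold rowFree
      rw [Finset.filter_filter]
      exact Finset.filter_congr fun c _ => by tauto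
    rw [this]
    rfl
  rw [e1, e2, e3, nonfree_pair_card T i]

lemma cnt_bk_i1 (T : SemistandardYoungTableau lam) (i : ℕ) :
    cnt lam (bk lam T i) (i + 1) = cnt lam T i := by
  unfold cnt
  rw [card_filter_split lam.cells (fun p => bk lam T i p.1 p.2 = i + 1)
    (fun p => Free lam T i p.1 p.2)]
  rw [card_filter_split lam.cells (fun p => T p.1 p.2 = i)
    (fun p => Free lam T i p.1 p.2)]
  have e1 : lam.cells.filter (fun p => bk lam T i p.1 p.2 = i + 1 ∧ Free lam T i p.1 p.2)
      = lam.cells.filter (fun p => Free lam T i p.1 p.2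
          ∧ ¬ pos lam T i p.1 p.2 < B lam T i p.1) := by
    apply Finset.filter_congr
    intro p _
    rw [bk_apply]
    unfold bkEntry
    constructor
    · rintro ⟨hv, hf⟩
      rw [if_pos hf] at hv
      refine ⟨hf, ?_⟩
      intro hh
      rw [if_pos hh] at hv
      omega
    · rintro ⟨hf, hlt⟩
      rw [if_pos hf, if_neg hlt]
      exact ⟨rfl, hf⟩
  have e2 : lam.cells.filter (fun p => bk lam T i p.1 p.2 = i + 1 ∧ ¬ Free lam T i p.1 p.2)
      = lam.cells.filter (fun p => T p.1 p.2 = i + 1 ∧ ¬ Free lam T i p.1 p.2) := by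
    apply Finset.filter_congr
    intro p _
    constructor
    · rintro ⟨hv, hf⟩
      rw [bk_apply, bkEntry_of_not_free hf] at hv
      exact ⟨hv, hf⟩
    · rintro ⟨hv, hf⟩
      rw [bk_apply, bkEntry_of_not_free hf]
      exact ⟨hv, hf⟩
  have e3 : (lam.cells.filter (fun p => Free lam T i p.1 p.2
        ∧ ¬ pos lam T i p.1 p.2 < B lam T i p.1)).card
      = (lam.cells.filter (fun p => T p.1 p.2 = i ∧ Free lam T i p.1 p.2)).card := by
    rw [card_cells_filter, card_cells_filter]
    refine Finset.sum_congr rfl fun r _ => ?_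
    rw [free_row_count_neg T i r]
    have : (Finset.range (lam.rowLen r)).filter (fun c => T r c = i ∧ Free lam T i r c)
        = (rowFree lam T i r).filter (fun c => T r c = i) := by
      unfold rowFree
      rw [Finset.filter_filter]
      exact Finset.filter_congr fun c _ => by tauto
    rw [this]
    rfl
  rw [e1, e2, e3, nonfree_pair_card T i]


/-! ### Invariance of the number of tableaux with given content -/

/-- The number of SSYT of shape `lam` with content function `f : ℕ → ℕ`. -/
noncomputable def N (lam : YoungDiagram) (f : ℕ → ℕ) : ℕ :=
  Nat.card {T : SemistandardYoungTableau lam //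
    ∀ v : ℕ, (lam.cells.filter (fun c => T c.1 c.2 = v)).card = f v}

lemma N_swap_adj (lam : YoungDiagram) (f : ℕ → ℕ) (i : ℕ) :
    N lam f = N lam (fun v => f (Equiv.swap i (i + 1) v)) := by
  apply Nat.card_congr
  have key : ∀ (T : SemistandardYoungTableau lam),
      (∀ v : ℕ, (lam.cells.filter (fun c => T c.1 c.2 = v)).card = f v) →
      ∀ v : ℕ, (lam.cells.filter (fun c => bk lam T i c.1 c.2 = v)).card
        = f (Equiv.swap i (i + 1) v) := by
    intro T hT v
    rcases eq_or_ne v i with rfl | hvi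
    · rw [Equiv.swap_apply_left]
      exact (cnt_bk_i T v).trans (hT (v + 1))
    rcases eq_or_ne v (i + 1) with rfl | hvi1
    · rw [Equiv.swap_apply_right]
      exact (cnt_bk_i1 T i).trans (hT i)
    · rw [Equiv.swap_apply_of_ne_of_ne hvi hvi1]
      exact (cnt_bk_other T hvi hvi1).trans (hT v)
  have key' : ∀ (T : SemistandardYoungTableau lam),
      (∀ v : ℕ, (lam.cells.filter (fun c => T c.1 c.2 = v)).card
        = f (Equiv.swap i (i + 1) v)) →
      ∀ v : ℕ, (lam.cells.filter (fun c => bk lam T i c.1 c.2 = v)).card = f v := by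
    intro T hT v
    rcases eq_or_ne v i with rfl | hvi
    · have := (cnt_bk_i T v).trans (hT (v + 1))
      rwa [Equiv.swap_apply_right] at this
    rcases eq_or_ne v (i + 1) with rfl | hvi1
    · have := (cnt_bk_i1 T i).trans (hT i)
      rwa [Equiv.swap_apply_left] at this
    · have := (cnt_bk_other T hvi hvi1).trans (hT v)
      rwa [Equiv.swap_apply_of_ne_of_ne hvi hvi1] at this
  exact
    { toFun := fun T => ⟨bk lam T.1 i, key T.1 T.2⟩
      invFun := fun T => ⟨bk lam T.1 i, key' T.1 T.2⟩
      left_inv := fun T => Subtype.ext (bk_bk T.1 i)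
      right_inv := fun T => Subtype.ext (bk_bk T.1 i) }

lemma N_swap_lt (lam : YoungDiagram) :
    ∀ (d a b : ℕ), b - a = d → a < b → ∀ f : ℕ → ℕ,
      N lam f = N lam (fun v => f (Equiv.swap a b v)) := by
  intro d
  induction d using Nat.strong_induction_on with
  | _ d ih =>
    intro a b hd hab f
    rcases eq_or_ne b (a + 1) with rfl | hne
    · exact N_swap_adj lam f a
    · obtain ⟨e, rfl⟩ : ∃ e, b = e + 1 := ⟨b - 1, by omega⟩
      have hae : a < e := by omega
      have h1 : N lam f = N lam (fun v => f (Equiv.swap e (e + 1) v)) := N_swap_adj lam f e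
      have h2 : N lam (fun v => f (Equiv.swap e (e + 1) v))
          = N lam (fun v => f (Equiv.swap e (e + 1) (Equiv.swap a e v))) :=
        ih (e - a) (by omega) a e rfl hae _
      have h3 : N lam (fun v => f (Equiv.swap e (e + 1) (Equiv.swap a e v)))
          = N lam (fun v => f (Equiv.swap e (e + 1)
              (Equiv.swap a e (Equiv.swap e (e + 1) v)))) :=
        N_swap_adj lam _ e
      rw [h1, h2, h3]
      congr 1
      funext v
      simp only [Equiv.swap_apply_def]
      split_ifs <;> congr 1 <;> omega

lemma N_swap (lam : YoungDiagram) (f : ℕ → ℕ) (a b : ℕ) :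
    N lam f = N lam (fun v => f (Equiv.swap a b v)) := by
  rcases lt_trichotomy a b with h | h | h
  · exact N_swap_lt lam (b - a) a b rfl h f
  · subst h
    simp only [Equiv.swap_self]
    rfl
  · have := N_swap_lt lam (a - b) b a rfl h f
    rw [this]
    congr 1
    funext v
    rw [Equiv.swap_comm]


/-! ### From permutations of `Fin k` to permutations of `ℕ` -/

lemma val_swap {k : ℕ} (x y z : Fin k) :
    ((Equiv.swap x y z : Fin k) : ℕ) = Equiv.swap (x : ℕ) (y : ℕ) (z : ℕ) := by
  rcases eq_or_ne z x with rfl | hzx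
  · rw [Equiv.swap_apply_left, Equiv.swap_apply_left]
  rcases eq_or_ne z y with rfl | hzy
  · rw [Equiv.swap_apply_right, Equiv.swap_apply_right]
  · rw [Equiv.swap_apply_of_ne_of_ne hzx hzy,
      Equiv.swap_apply_of_ne_of_ne (fun h => hzx (Fin.val_injective h))
        (fun h => hzy (Fin.val_injective h))]

/-- content function on `ℕ` associated to a composition. -/
def toFun {k : ℕ} (μ : Fin k → ℕ) : ℕ → ℕ := fun v => if h : v < k then μ ⟨v, h⟩ else 0

lemma toFun_swap {k : ℕ} (μ : Fin k → ℕ) (x y : Fin k) :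
    toFun (μ ∘ Equiv.swap x y) = fun v => toFun μ (Equiv.swap (x : ℕ) (y : ℕ) v) := by
  funext v
  unfold toFun
  by_cases h : v < k
  · rw [dif_pos h]
    have e : Equiv.swap (x : ℕ) (y : ℕ) v = ((Equiv.swap x y ⟨v, h⟩ : Fin k) : ℕ) :=
      (val_swap x y ⟨v, h⟩).symm
    rw [e, dif_pos (Fin.is_lt _), Fin.eta]
    rfl
  · rw [dif_neg h]
    have hx : v ≠ (x : ℕ) := fun hh => h (hh ▸ x.is_lt)
    have hy : v ≠ (y : ℕ) := fun hh => h (hh ▸ y.is_lt)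
    rw [Equiv.swap_apply_of_ne_of_ne hx hy, dif_neg h]

lemma kostka_eq_N {k : ℕ} (lam : YoungDiagram) (μ : Fin k → ℕ) :
    kostka lam μ = N lam (toFun μ) := rfl

lemma kostka_swap {k : ℕ} (lam : YoungDiagram) (μ : Fin k → ℕ) (x y : Fin k) :
    kostka lam μ = kostka lam (μ ∘ Equiv.swap x y) := by
  rw [kostka_eq_N, kostka_eq_N, toFun_swap]
  exact N_swap lam (toFun μ) x y

lemma kostka_perm {k : ℕ} (lam : YoungDiagram) (σ : Equiv.Perm (Fin k)) :
    ∀ μ : Fin k → ℕ, kostka lam μ = kostka lam (μ ∘ σ) := by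
  refine Equiv.Perm.swap_induction_on
    (motive := fun τ : Equiv.Perm (Fin k) => ∀ μ : Fin k → ℕ, kostka lam μ = kostka lam (μ ∘ τ))
    σ ?_ ?_
  · intro μ
    rfl
  · intro f x y hxy ih μ
    calc kostka lam μ = kostka lam (μ ∘ Equiv.swap x y) := kostka_swap lam μ x y
      _ = kostka lam ((μ ∘ Equiv.swap x y) ∘ f) := ih (μ ∘ Equiv.swap x y)
      _ = kostka lam (μ ∘ (Equiv.swap x y * f)) := rfl

end BKaux

theorem kostka_invariant_under_content_permutation
    (n k : ℕ) (lam : YoungDiagram) (hlam : lam.card = n)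
    (μ : Fin k → ℕ) (hμ : ∑ i, μ i = n) (σ : Equiv.Perm (Fin k)) :
    kostka lam μ = kostka lam (μ ∘ σ) :=
  BKaux.kostka_perm lam σ μ
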